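/- arXiv:1112.3437 — 3 statements merged into one kernel-verified Lean document; each statement's English description precedes it below -/
import Mathlib

section
/- Let Π₁,...,Πₙ be positive semidefinite operators with ∑ᵢ Πᵢ = I on a finite-dimensional complex inner product space, and let ρ₁,...,ρₙ be density matrices with Tr(Πᵢ ρⱼ) = δᵢⱼ. Let Pⱼ be the orthogonal projection onto the support of ρⱼ and let ϱⱼ = Pⱼ / rank(ρⱼ) be the normalized projector. Then Tr(Πᵢ ϱⱼ) = δᵢⱼ for all i, j. -/
open Matrix ComplexOrder

/-- The support of an operator: the range of the associated linear map
(for positive semidefinite operators this is the orthogonal complement of the kernel). -/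
noncomputable def supp {D : ℕ} (ρ : Matrix (Fin D) (Fin D) ℂ) : Submodule ℂ (Fin D → ℂ) :=
  LinearMap.range ρ.mulVecLin

/-- If the trace of `Xᴴ * X` vanishes, then `X = 0`. -/
lemma trace_conjTranspose_mul_self_eq_zero_aux {m k : ℕ} {X : Matrix (Fin m) (Fin k) ℂ}
    (h : (Xᴴ * X).trace = 0) : X = 0 := by
  have hdiag : ∀ j, (Xᴴ * X) j j = 0 := by
    have hnn : ∀ j : Fin k, (0 : ℂ) ≤ (Xᴴ * X) j j := by
      intro j
      rw [Matrix.mul_apply]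
      exact Finset.sum_nonneg fun i _ => star_mul_self_nonneg (X i j)
    intro j
    have := (Finset.sum_eq_zero_iff_of_nonneg (fun i _ => hnn i)).mp h j (Finset.mem_univ j)
    exact this
  ext i j
  have h2 := hdiag j
  rw [Matrix.mul_apply] at h2
  simp only [Matrix.zero_apply]
  have h4 := (Finset.sum_eq_zero_iff_of_nonneg
      (fun k (_ : k ∈ Finset.univ) => star_mul_self_nonneg (X k j))).mp ?_ i (Finset.mem_univ i)
  · rcases mul_eq_zero.mp h4 with h | h
    · simpa using congrArg star h
    · exact h
  · simpa [Matrix.conjTranspose_apply] using h2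

open scoped MatrixOrder in
lemma posSemidef_exists_conjTranspose_mul_self_aux {k : ℕ} {A : Matrix (Fin k) (Fin k) ℂ}
    (hA : A.PosSemidef) : ∃ B : Matrix (Fin k) (Fin k) ℂ, A = Bᴴ * B := by
  have h0 : (0 : Matrix (Fin k) (Fin k) ℂ) ≤ A := Matrix.nonneg_iff_posSemidef.mpr hA
  refine ⟨CFC.sqrt A, ?_⟩
  rw [show (CFC.sqrt A)ᴴ = CFC.sqrt A from (CFC.sqrt_nonneg A).isSelfAdjoint.star_eq,
    CFC.sqrt_mul_sqrt_self A h0]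

/-- For positive semidefinite matrices, vanishing trace of the product implies the
product vanishes. -/
lemma psd_trace_mul_eq_zero {k : ℕ} {A B : Matrix (Fin k) (Fin k) ℂ}
    (hA : A.PosSemidef) (hB : B.PosSemidef) (h : (A * B).trace = 0) : A * B = 0 := by
  obtain ⟨C, hC⟩ := posSemidef_exists_conjTranspose_mul_self_aux hA
  obtain ⟨E, hE⟩ := posSemidef_exists_conjTranspose_mul_self_aux hB
  subst hC hE
  -- trace (Cᴴ C Eᴴ E) = trace ((E Cᴴ)ᴴ (E Cᴴ))
  have key : ((E * Cᴴ)ᴴ * (E * Cᴴ)).trace = 0 := by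
    rw [Matrix.conjTranspose_mul, Matrix.conjTranspose_conjTranspose]
    have e1 : C * Eᴴ * (E * Cᴴ) = C * (Eᴴ * E * Cᴴ) := by
      simp only [Matrix.mul_assoc]
    rw [e1, Matrix.trace_mul_comm]
    have e2 : Eᴴ * E * Cᴴ * C = Eᴴ * E * (Cᴴ * C) := by rw [Matrix.mul_assoc]
    rw [e2, Matrix.trace_mul_comm, h]
  have hz : E * Cᴴ = 0 := trace_conjTranspose_mul_self_eq_zero_aux key
  have hz2 : C * Eᴴ = 0 := by
    have := congrArg Matrix.conjTranspose hz
    simpa using this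
  calc Cᴴ * C * (Eᴴ * E) = Cᴴ * (C * Eᴴ) * E := by simp only [Matrix.mul_assoc]
    _ = 0 := by rw [hz2, Matrix.mul_zero, Matrix.zero_mul]

/-- A matrix is zero iff it kills every vector. -/
lemma matrix_eq_zero_of_mulVec {k : ℕ} {A : Matrix (Fin k) (Fin k) ℂ}
    (h : ∀ v, A *ᵥ v = 0) : A = 0 := by
  ext i j
  have := congrFun (h (Pi.single j 1)) i
  rwa [Matrix.mulVec_single_one] at this

/-- Forward direction of Theorem 1: a POVM perfectly distinguishing states `ρ j`
also perfectly distinguishes the normalized projectors onto their supports. -/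
theorem povm_distinguishes_normalized_support_projectors {D n : ℕ}
    (M : Fin n → Matrix (Fin D) (Fin D) ℂ)
    (hM : ∀ i, (M i).PosSemidef)
    (hsum : ∑ i, M i = 1)
    (ρ : Fin n → Matrix (Fin D) (Fin D) ℂ)
    (hρ : ∀ j, (ρ j).PosSemidef) (hρtr : ∀ j, (ρ j).trace = 1)
    (hdist : ∀ i j, (M i * ρ j).trace = if i = j then 1 else 0)
    (P : Fin n → Matrix (Fin D) (Fin D) ℂ)
    (hPherm : ∀ j, (P j).IsHermitian)
    (hPidem : ∀ j, P j * P j = P j)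
    (hPrange : ∀ j, supp (P j) = supp (ρ j)) :
    ∀ i j, (M i * (((ρ j).rank : ℂ)⁻¹ • P j)).trace = if i = j then 1 else 0 := by
  -- Off-diagonal vanishing: M i * P j = 0 when i ≠ j
  have hMP : ∀ i j, i ≠ j → M i * P j = 0 := by
    intro i j hij
    have h0 : M i * ρ j = 0 := by
      apply psd_trace_mul_eq_zero (hM i) (hρ j)
      rw [hdist i j, if_neg hij]
    apply matrix_eq_zero_of_mulVec
    intro v
    -- (P j) *ᵥ v lies in supp (P j) = supp (ρ j)
    have hmem : (P j) *ᵥ v ∈ supp (ρ j) := by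
      rw [← hPrange j]
      exact ⟨v, rfl⟩
    obtain ⟨w, hw⟩ := hmem
    simp only [Matrix.mulVecLin_apply] at hw
    rw [← Matrix.mulVec_mulVec, ← hw, Matrix.mulVec_mulVec, h0, Matrix.zero_mulVec]
  -- trace of P j equals rank of ρ j
  have htrP : ∀ j, (P j).trace = ((ρ j).rank : ℂ) := by
    intro j
    have hproj : LinearMap.IsProj (supp (P j)) (P j).mulVecLin := by
      constructor
      · intro x
        exact ⟨x, rfl⟩
      · rintro x ⟨y, rfl⟩
        have := congrArg (fun A => A *ᵥ y) (hPidem j)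
        simpa [Matrix.mulVecLin_apply, ← Matrix.mulVec_mulVec] using this
    have htr := hproj.trace
    have hmat : LinearMap.trace ℂ (Fin D → ℂ) (P j).mulVecLin = (P j).trace := by
      rw [LinearMap.trace_eq_matrix_trace ℂ (Pi.basisFun ℂ (Fin D)),
        LinearMap.toMatrix_eq_toMatrix', ← Matrix.toLin'_apply', LinearMap.toMatrix'_toLin']
    have hrank : Module.finrank ℂ (supp (P j)) = (ρ j).rank := by
      rw [hPrange j]; rfl
    rw [← hmat, htr, hrank]
  -- rank of ρ j is nonzero
  have hrank_ne : ∀ j, ((ρ j).rank : ℂ) ≠ 0 := by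
    intro j
    simp only [ne_eq, Nat.cast_eq_zero]
    intro hr
    have hρ0 : ρ j = 0 := by
      apply matrix_eq_zero_of_mulVec
      intro v
      have : LinearMap.range (ρ j).mulVecLin = ⊥ :=
        Submodule.finrank_eq_zero.mp hr
      have := LinearMap.range_eq_bot.mp this
      exact congrFun (congrArg (fun f => f.toFun) this) v
    have := hρtr j
    rw [hρ0, Matrix.trace_zero] at this
    exact one_ne_zero this.symm
  -- main computation
  intro i j
  rw [Matrix.mul_smul, Matrix.trace_smul]
  by_cases hij : i = j
  · subst hij
    -- trace (M i * P i) = trace P i since other terms vanish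
    have hsumtr : ∑ k, (M k * P i).trace = (P i).trace := by
      rw [← Matrix.trace_sum]
      congr 1
      rw [← Finset.sum_mul, hsum, one_mul]
    have hothers : ∀ k ∈ Finset.univ, k ≠ i → (M k * P i).trace = 0 := by
      intro k _ hk
      rw [hMP k i hk, Matrix.trace_zero]
    have : (M i * P i).trace = (P i).trace := by
      rw [← hsumtr, Finset.sum_eq_single i hothers (fun h => absurd (Finset.mem_univ i) h)]
    rw [this, htrP i, if_pos rfl, smul_eq_mul, inv_mul_cancel₀ (hrank_ne i)]
  · rw [hMP i j hij, Matrix.trace_zero, smul_zero, if_neg hij]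
end

section
/- Let ρ₁,...,ρₙ be density matrices on a finite-dimensional complex inner product space, and suppose there exists a POVM {Πᵢ} with Tr(Πᵢ ρⱼ) = δᵢⱼ. Then the supports of ρ₁,...,ρₙ are pairwise orthogonal subspaces. -/
open Matrix ComplexOrder

lemma eq_zero_of_trace_conjTranspose_mul_self {D : ℕ} (X : Matrix (Fin D) (Fin D) ℂ)
    (h : (Xᴴ * X).trace = 0) : X = 0 := by
  have h' : ∑ j, ∑ i, star (X i j) * X i j = 0 := by
    simpa [Matrix.trace, Matrix.mul_apply, Matrix.diag, conjTranspose_apply] using h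
  have hnn : ∀ p ∈ (Finset.univ : Finset (Fin D × Fin D)),
      (0 : ℂ) ≤ star (X p.2 p.1) * X p.2 p.1 := fun p _ => star_mul_self_nonneg _
  rw [← Finset.sum_product'] at h'
  have := (Finset.sum_eq_zero_iff_of_nonneg hnn).mp h'
  ext i j
  have h0 := this (j, i) (Finset.mem_univ _)
  rcases mul_eq_zero.mp h0 with h1 | h1
  · simpa using star_eq_zero.mp h1
  · simpa using h1

open scoped MatrixOrder in
lemma mul_eq_zero_of_trace_zero {D : ℕ} {A B : Matrix (Fin D) (Fin D) ℂ}
    (hA : A.PosSemidef) (hB : B.PosSemidef) (h : (A * B).trace = 0) : A * B = 0 := by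
  set S := CFC.sqrt A with hS
  set T := CFC.sqrt B with hT
  have hST : S * T = 0 := by
    apply eq_zero_of_trace_conjTranspose_mul_self
    have hSh : Sᴴ = S := (CFC.sqrt_nonneg A).posSemidef.1
    have hTh : Tᴴ = T := (CFC.sqrt_nonneg B).posSemidef.1
    have : ((S * T)ᴴ * (S * T)).trace = (A * B).trace := by
      rw [conjTranspose_mul, hSh, hTh, show T * S * (S * T) = T * (S * S * T) by
        simp [Matrix.mul_assoc], Matrix.trace_mul_comm, Matrix.mul_assoc, ← Matrix.mul_assoc,
        CFC.sqrt_mul_sqrt_self A hA.nonneg]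
      rw [Matrix.mul_assoc, CFC.sqrt_mul_sqrt_self B hB.nonneg]
    rw [this, h]
  have : A * B = S * ((S * T) * T) := by
    conv_lhs => rw [← CFC.sqrt_mul_sqrt_self A hA.nonneg, ← CFC.sqrt_mul_sqrt_self B hB.nonneg]
    simp only [Matrix.mul_assoc]
    rfl
  rw [this, hST, Matrix.zero_mul, Matrix.mul_zero]

/-- If density matrices can be perfectly distinguished by a POVM, then their supports
are pairwise orthogonal. -/
theorem supports_pairwise_orthogonal_of_povm_distinguishable {D n : ℕ}
    (ρ : Fin n → Matrix (Fin D) (Fin D) ℂ)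
    (hρ : ∀ j, (ρ j).PosSemidef) (hρtr : ∀ j, (ρ j).trace = 1)
    (hpovm : ∃ M : Fin n → Matrix (Fin D) (Fin D) ℂ,
      (∀ i, (M i).PosSemidef) ∧ (∑ i, M i = 1) ∧
      (∀ i j, (M i * ρ j).trace = if i = j then 1 else 0)) :
    ∀ i j, i ≠ j → ∀ u ∈ supp (ρ i), ∀ v ∈ supp (ρ j), star u ⬝ᵥ v = 0 := by
  obtain ⟨M, hM, hMsum, hMtr⟩ := hpovm
  -- M i * ρ j = 0 for i ≠ j
  have hzero : ∀ i j, i ≠ j → M i * ρ j = 0 := by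
    intro i j hij
    exact mul_eq_zero_of_trace_zero (hM i) (hρ j) (by simp [hMtr i j, hij])
  -- M j * ρ j = ρ j
  have hfix : ∀ j, M j * ρ j = ρ j := by
    intro j
    have : (∑ i, M i) * ρ j = ρ j := by rw [hMsum, Matrix.one_mul]
    rw [Finset.sum_mul] at this
    rw [Finset.sum_eq_single j (fun i _ hij => hzero i j hij) (by simp)] at this
    exact this
  intro i j hij u hu v hv
  obtain ⟨x, hx⟩ := hu
  obtain ⟨y, hy⟩ := hv
  -- ρ i * ρ j = 0
  have hρij : ρ i * ρ j = 0 := by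
    have h1 : ρ i * M j = 0 := by
      have := congrArg conjTranspose (hzero j i hij.symm)
      rw [conjTranspose_mul, conjTranspose_zero, (hρ i).1.eq, (hM j).1.eq] at this
      exact this
    calc ρ i * ρ j = ρ i * (M j * ρ j) := by rw [hfix]
      _ = ρ i * M j * ρ j := by rw [Matrix.mul_assoc]
      _ = 0 := by rw [h1, Matrix.zero_mul]
  rw [← hx, ← hy]
  simp only [mulVecLin_apply]
  rw [Matrix.star_mulVec, dotProduct_mulVec, Matrix.vecMul_vecMul, (hρ i).1.eq, hρij]
  simp
end

section
/- Let σ₁,...,σₙ and σ'₁,...,σ'ₙ be two families of density matrices on a finite-dimensional complex inner product space such that for every i the support of σᵢ equals the support of σ'ᵢ. Then a POVM {Πᵢ} satisfies Tr(Πᵢ σⱼ) = δᵢⱼ for all i,j if and only if it satisfies Tr(Πᵢ σ'ⱼ) = δᵢⱼ for all i,j. -/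
open Matrix ComplexOrder

lemma trace_conjTranspose_mul_self_eq_zero {D : ℕ} (A : Matrix (Fin D) (Fin D) ℂ)
    (h : (Aᴴ * A).trace = 0) : A = 0 := by
  have h' : ∑ i, ∑ j, Complex.normSq (A j i) = 0 := by
    have : ((∑ i, ∑ j, Complex.normSq (A j i) : ℝ) : ℂ) = 0 := by
      rw [← h]
      simp only [Matrix.trace, Matrix.diag, Matrix.mul_apply, Matrix.conjTranspose_apply]
      push_cast
      refine Finset.sum_congr rfl fun i _ => Finset.sum_congr rfl fun j _ => ?_
      rw [Complex.normSq_eq_conj_mul_self]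
      rfl
    exact_mod_cast this
  ext j i
  have h1 : ∀ i ∈ Finset.univ, (0:ℝ) ≤ ∑ j, Complex.normSq (A j i) :=
    fun i _ => Finset.sum_nonneg fun j _ => Complex.normSq_nonneg _
  have h2 := (Finset.sum_eq_zero_iff_of_nonneg h1).mp h' i (Finset.mem_univ i)
  have h3 := (Finset.sum_eq_zero_iff_of_nonneg
    (fun j _ => Complex.normSq_nonneg (A j i))).mp h2 j (Finset.mem_univ j)
  simpa using Complex.normSq_eq_zero.mp h3

open scoped MatrixOrder in
lemma trace_mul_eq_zero_iff {D : ℕ} {A B : Matrix (Fin D) (Fin D) ℂ}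
    (hA : A.PosSemidef) (hB : B.PosSemidef) :
    (A * B).trace = 0 ↔ A * B = 0 := by
  constructor
  · intro h
    set sA := CFC.sqrt A with hsA
    set sB := CFC.sqrt B with hsB
    have hAe : sA * sA = A := CFC.sqrt_mul_sqrt_self A hA.nonneg
    have hBe : sB * sB = B := CFC.sqrt_mul_sqrt_self B hB.nonneg
    have hAherm : sAᴴ = sA := (CFC.sqrt_nonneg A).posSemidef.1
    have hBherm : sBᴴ = sB := (CFC.sqrt_nonneg B).posSemidef.1
    have key : ((sA * sB)ᴴ * (sA * sB)).trace = 0 := by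
      have : (sA * sB)ᴴ * (sA * sB) = sB * (A * sB) := by
        rw [Matrix.conjTranspose_mul, hAherm, hBherm, ← hAe]
        noncomm_ring
      rw [this, Matrix.trace_mul_comm, Matrix.mul_assoc, hBe, h]
    have hz : sA * sB = 0 := trace_conjTranspose_mul_self_eq_zero _ key
    calc A * B = sA * (sA * sB) * sB := by rw [← hAe, ← hBe]; noncomm_ring
    _ = 0 := by rw [hz]; simp
  · intro h; rw [h, Matrix.trace_zero]

lemma mul_eq_zero_iff_supp {D : ℕ} (A B : Matrix (Fin D) (Fin D) ℂ) :
    A * B = 0 ↔ supp B ≤ LinearMap.ker A.mulVecLin := by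
  rw [supp, LinearMap.range_le_ker_iff, ← Matrix.mulVecLin_mul]
  constructor
  · intro h; rw [h, Matrix.mulVecLin_zero]
  · intro h
    apply Matrix.toLin'.injective
    rw [Matrix.toLin'_apply', Matrix.toLin'_apply', h, Matrix.mulVecLin_zero]

lemma degeneracy_mp {D n : ℕ}
    (σ σ' : Fin n → Matrix (Fin D) (Fin D) ℂ)
    (hσ : ∀ i, (σ i).PosSemidef)
    (hσ' : ∀ i, (σ' i).PosSemidef) (hσ'tr : ∀ i, (σ' i).trace = 1)
    (hsupp : ∀ i, supp (σ i) = supp (σ' i))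
    (M : Fin n → Matrix (Fin D) (Fin D) ℂ)
    (hM : ∀ i, (M i).PosSemidef) (hsum : ∑ i, M i = 1)
    (h : ∀ i j, (M i * σ j).trace = if i = j then 1 else 0) :
    (∀ i j, (M i * σ' j).trace = if i = j then 1 else 0) := by
  have off : ∀ i j, i ≠ j → (M i * σ' j).trace = 0 := by
    intro i j hij
    have h0 : (M i * σ j).trace = 0 := by rw [h i j, if_neg hij]
    have hz : M i * σ j = 0 := (trace_mul_eq_zero_iff (hM i) (hσ j)).mp h0
    have hk : supp (σ' j) ≤ LinearMap.ker (M i).mulVecLin := by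
      rw [← hsupp j]; exact (mul_eq_zero_iff_supp _ _).mp hz
    have : M i * σ' j = 0 := (mul_eq_zero_iff_supp _ _).mpr hk
    rw [this, Matrix.trace_zero]
  intro i j
  rcases eq_or_ne i j with rfl | hij
  · rw [if_pos rfl]
    have hsumtr : ∑ k, (M k * σ' i).trace = 1 := by
      rw [← Matrix.trace_sum, ← Finset.sum_mul, hsum, Matrix.one_mul, hσ'tr]
    rw [Finset.sum_eq_single i (fun k _ hk => off k i hk) (by simp)] at hsumtr
    exact hsumtr
  · rw [if_neg hij]; exact off i j hij

/-- Subspace degeneracy (Proposition 3): two ensembles with identical supports are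
perfectly distinguished by exactly the same POVMs. -/
theorem subspace_degeneracy {D n : ℕ}
    (σ σ' : Fin n → Matrix (Fin D) (Fin D) ℂ)
    (hσ : ∀ i, (σ i).PosSemidef) (hσtr : ∀ i, (σ i).trace = 1)
    (hσ' : ∀ i, (σ' i).PosSemidef) (hσ'tr : ∀ i, (σ' i).trace = 1)
    (hsupp : ∀ i, supp (σ i) = supp (σ' i))
    (M : Fin n → Matrix (Fin D) (Fin D) ℂ)
    (hM : ∀ i, (M i).PosSemidef) (hsum : ∑ i, M i = 1) :
    (∀ i j, (M i * σ j).trace = if i = j then 1 else 0) ↔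
      (∀ i j, (M i * σ' j).trace = if i = j then 1 else 0) :=
  ⟨degeneracy_mp σ σ' hσ hσ' hσ'tr hsupp M hM hsum,
   degeneracy_mp σ' σ hσ' hσ hσtr (fun i => (hsupp i).symm) M hM hsum⟩
end
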